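/- arXiv:2111.12168 — 6 statements merged into one kernel-verified Lean document; each statement's English description precedes it below -/
import Mathlib

section
/- Let D be an arc-locally in-semicomplete digraph with vertex partition (V₁, V₂, V₃) as in the structure theorem (V₁ ↦ V₂, V₁ ⇒ V₃, V₂ ⇒ V₃, D[V₂] an odd extended cycle Q[X₁,...,X_k] of length k ≥ 5, D[V₃] bipartite). For d ≥ 1 let N_d be the set of vertices at distance d from V₂. Then for all d ≥ 2, N_d is a stable set. -/
open Set

namespace Paper

variable {V : Type*}

/-- `u` and `v` are adjacent in the underlying graph of the digraph `E`. -/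
def Adj (E : V → V → Prop) (u v : V) : Prop := E u v ∨ E v u

/-- A stable set: pairwise non-adjacent vertices. -/
def Stable (E : V → V → Prop) (S : Set V) : Prop :=
  ∀ u ∈ S, ∀ v ∈ S, u ≠ v → ¬ Adj E u v

/-- A stable set of the subdigraph induced by `W`. -/
def StableOn (E : V → V → Prop) (W S : Set V) : Prop := S ⊆ W ∧ Stable E S

/-- A maximum stable set of the subdigraph induced by `W`. -/
def MaxStableOn (E : V → V → Prop) (W S : Set V) : Prop :=
  StableOn E W S ∧ ∀ T, StableOn E W T → T.ncard ≤ S.ncard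

/-- Neighborhood of `S`: vertices outside `S` adjacent to some vertex of `S`. -/
def Nbhd (E : V → V → Prop) (S : Set V) : Set V :=
  {v | v ∉ S ∧ ∃ u ∈ S, Adj E u v}

/-- A (nonempty) directed path, as a list of vertices. -/
def IsPath (E : V → V → Prop) (p : List V) : Prop := p ≠ [] ∧ p.Chain' E

/-- A path partition of the vertex set `W` into vertex-disjoint directed paths. -/
def PathPartitionOn (E : V → V → Prop) (W : Set V) (P : List (List V)) : Prop :=
  (∀ p ∈ P, IsPath E p) ∧ P.flatten.Nodup ∧ ∀ v, v ∈ P.flatten ↔ v ∈ W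

/-- `S` and `P` are orthogonal: each path contains exactly one vertex of `S`. -/
def Orthogonal (S : Set V) (P : List (List V)) : Prop :=
  ∀ p ∈ P, ∃! v, v ∈ p ∧ v ∈ S

/-- An `S`-path partition of `W`. -/
def SPartOn (E : V → V → Prop) (W S : Set V) (P : List (List V)) : Prop :=
  PathPartitionOn E W P ∧ Orthogonal S P

/-- An `S_BE`-path partition of `W`: orthogonal and every vertex of `S` starts or
ends its path. -/
def BEPartOn (E : V → V → Prop) (W S : Set V) (P : List (List V)) : Prop :=
  SPartOn E W S P ∧ ∀ p ∈ P, ∀ v ∈ p, v ∈ S → p.head? = some v ∨ p.getLast? = some v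

/-- The induced subdigraph on `W` satisfies the α-property. -/
def AlphaPropOn (E : V → V → Prop) (W : Set V) : Prop :=
  ∀ S, MaxStableOn E W S → ∃ P, SPartOn E W S P

/-- The induced subdigraph on `W` satisfies the BE-property. -/
def BEPropOn (E : V → V → Prop) (W : Set V) : Prop :=
  ∀ S, MaxStableOn E W S → ∃ P, BEPartOn E W S P

/-- A matching (w.r.t. a symmetric-or-not adjacency `A`) whose edges go from `X`
to `Y`: pairwise vertex-disjoint edges. -/
def MatchingBetween (A : V → V → Prop) (X Y : Set V) (M : Set (V × V)) : Prop :=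
  (∀ e ∈ M, e.1 ∈ X ∧ e.2 ∈ Y ∧ A e.1 e.2) ∧
  (∀ e ∈ M, ∀ f ∈ M, e ≠ f →
    e.1 ≠ f.1 ∧ e.1 ≠ f.2 ∧ e.2 ≠ f.1 ∧ e.2 ≠ f.2)

/-- The matching `M` covers the set `X`. -/
def Covers (M : Set (V × V)) (X : Set V) : Prop :=
  ∀ x ∈ X, ∃ e ∈ M, e.1 = x ∨ e.2 = x

/-- Arc-locally in-semicomplete digraph. -/
def ArcLocallyInSemicomplete (E : V → V → Prop) : Prop :=
  ∀ u v, E u v → ∀ a b, E a u → E b v → a = b ∨ Adj E a b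

/-- `A ↦ B`: every vertex of `A` dominates every vertex of `B`, and no edge from
`B` to `A`. -/
def Domin (E : V → V → Prop) (A B : Set V) : Prop :=
  (∀ a ∈ A, ∀ b ∈ B, E a b) ∧ ∀ a ∈ A, ∀ b ∈ B, ¬ E b a

/-- `A ⇒ B`: there is no edge from `B` to `A`. -/
def NoBack (E : V → V → Prop) (A B : Set V) : Prop :=
  ∀ a ∈ A, ∀ b ∈ B, ¬ E b a

/-- The induced subdigraph on `W` has bipartite underlying graph. -/
def BipartiteOn (E : V → V → Prop) (W : Set V) : Prop :=
  ∃ A B : Set V, A ∪ B = W ∧ Disjoint A B ∧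
    (∀ u ∈ A, ∀ v ∈ A, ¬ Adj E u v) ∧ (∀ u ∈ B, ∀ v ∈ B, ¬ Adj E u v)

/-- There is a directed walk of length `n` from `u` to `v`. -/
def WalkLen (E : V → V → Prop) : ℕ → V → V → Prop
  | 0, u, v => u = v
  | n+1, u, v => ∃ w, E u w ∧ WalkLen E n w v

/-- The set of vertices at distance exactly `d` from the set `A`. -/
def Nd (E : V → V → Prop) (A : Set V) (d : ℕ) : Set V :=
  {v | (∃ u ∈ A, WalkLen E d u v) ∧ ∀ d' < d, ¬ ∃ u ∈ A, WalkLen E d' u v}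

/-- Out-neighborhood of a set: vertices outside `A` dominated by some vertex of `A`. -/
def NplusSet (E : V → V → Prop) (A : Set V) : Set V :=
  {v | v ∉ A ∧ ∃ u ∈ A, E u v}

/-- The induced subdigraph on `W` is the extended cycle `Q[X 0, …, X (k-1)]`. -/
def ExtCycleOn (E : V → V → Prop) (k : ℕ) (X : ZMod k → Set V) (W : Set V) : Prop :=
  (⋃ i, X i) = W ∧ (∀ i j, i ≠ j → Disjoint (X i) (X j)) ∧
  (∀ i, (X i).Nonempty) ∧ (∀ i, Stable E (X i)) ∧
  (∀ u ∈ W, ∀ v ∈ W, (E u v ↔ ∃ i, u ∈ X i ∧ v ∈ X (i + 1)))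

/-- The partition `(V₁,V₂,V₃)` from the structure theorem for arc-locally
in-semicomplete digraphs, with `D[V₂]` an odd extended cycle of length `k ≥ 5`. -/
def StructPartition (E : V → V → Prop) (V1 V2 V3 : Set V)
    (k : ℕ) (X : ZMod k → Set V) : Prop :=
  V1 ∪ V2 ∪ V3 = Set.univ ∧ Disjoint V1 V2 ∧ Disjoint V1 V3 ∧ Disjoint V2 V3 ∧
  Domin E V1 V2 ∧ NoBack E V1 V3 ∧ NoBack E V2 V3 ∧
  5 ≤ k ∧ Odd k ∧ ExtCycleOn E k X V2 ∧ BipartiteOn E V3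

/-- `D` contains an induced blocking odd cycle. -/
def HasInducedBlockingOddCycle (E : V → V → Prop) : Prop :=
  ∃ n : ℕ, Odd n ∧ 3 ≤ n ∧ ∃ f : ZMod n → V, Function.Injective f ∧
    (∀ i j : ZMod n, Adj E (f i) (f j) ↔ (j = i + 1 ∨ i = j + 1)) ∧
    (∀ i, ¬ E (f i) (f 0)) ∧ (∀ i, ¬ E (f 1) (f i))

/-- Stability number of the induced subdigraph on `W`. -/
noncomputable def alphaOn (E : V → V → Prop) (W : Set V) : ℕ :=
  sSup {n | ∃ S, StableOn E W S ∧ S.ncard = n}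

end Paper

/-!
Every vertex at distance `d ≥ 1` from `V₂` lies in `V₃`, since `V₂ ∪ V₃` has no arc leaving it.
Suppose `u → v` inside `N_d`. For `d = 2`, let `q → b → v` with `q ∈ V₂`; arc-local
in-semicompleteness at the arc `b → v` makes `q` and `u` equal or adjacent, which puts `u` at
distance at most `1` from `V₂` or gives an arc from `V₃` back to `V₂`. For `d > 2`, the
in-neighbours `a` of `u` and `b` of `v` in `N_{d-1}` are equal or adjacent; since `N_{d-1}` is stable
by induction, `a = b`, and then `a, u, v` is a triangle in the bipartite digraph `D[V₃]`.
-/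

namespace Paper

variable {V : Type*} {E : V → V → Prop}

/-- Unlike `Stable`, this also rules out loops. -/
def ArcFree (E : V → V → Prop) (S : Set V) : Prop :=
  ∀ u ∈ S, ∀ v ∈ S, ¬ E u v

theorem ArcFree.stable {S : Set V} (h : ArcFree E S) : Stable E S :=
  fun u hu v hv _ huv => huv.elim (h u hu v hv) (h v hv u hu)

theorem walkLen_one {u v : V} : WalkLen E 1 u v ↔ E u v := by
  simp [WalkLen]

theorem walkLen_succ_iff_right {n : ℕ} {u v : V} :
    WalkLen E (n + 1) u v ↔ ∃ w, WalkLen E n u w ∧ E w v := by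
  induction n generalizing u with
  | zero => simp [WalkLen]
  | succ n ih =>
    constructor
    · rintro ⟨w, huw, hwv⟩
      obtain ⟨z, hwz, hzv⟩ := ih.1 hwv
      exact ⟨z, ⟨w, huw, hwz⟩, hzv⟩
    · rintro ⟨z, ⟨w, huw, hwz⟩, hzv⟩
      exact ⟨w, huw, ih.2 ⟨z, hwz, hzv⟩⟩

theorem WalkLen.mem_of_forall_arc_mem {S : Set V} (hS : ∀ x ∈ S, ∀ y, E x y → y ∈ S) :
    ∀ {n : ℕ} {u v : V}, u ∈ S → WalkLen E n u v → v ∈ S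
  | 0, _, _, hu, rfl => hu
  | _ + 1, _, _, hu, ⟨_, huw, hwv⟩ => mem_of_forall_arc_mem hS (hS _ hu _ huw) hwv

theorem BipartiteOn.not_triangle {W : Set V} (h : BipartiteOn E W) {a b c : V}
    (ha : a ∈ W) (hb : b ∈ W) (hc : c ∈ W)
    (hab : Adj E a b) (hbc : Adj E b c) (hac : Adj E a c) : False := by
  obtain ⟨A, B, hAB, -, hA, hB⟩ := h
  rw [← hAB] at ha hb hc
  rcases ha with ha | ha <;> rcases hb with hb | hb <;> rcases hc with hc | hc
  all_goals first
    | exact hA a ha b hb hab | exact hA b hb c hc hbc | exact hA a ha c hc hac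
    | exact hB a ha b hb hab | exact hB b hb c hc hbc | exact hB a ha c hc hac

namespace Nd

variable {A : Set V} {d : ℕ} {v : V}

theorem not_walkLen (hv : v ∈ Nd E A d) {d' : ℕ} (hd' : d' < d) {a : V} (ha : a ∈ A) :
    ¬ WalkLen E d' a v :=
  fun h => hv.2 d' hd' ⟨a, ha, h⟩

theorem mem_of_zero (hv : v ∈ Nd E A 0) : v ∈ A := by
  obtain ⟨⟨a, ha, rfl⟩, -⟩ := hv
  exact ha

theorem not_mem (hv : v ∈ Nd E A d) (hd : 1 ≤ d) : v ∉ A :=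
  fun hvA => not_walkLen hv hd hvA rfl

theorem exists_pred (hv : v ∈ Nd E A (d + 1)) : ∃ b ∈ Nd E A d, E b v := by
  obtain ⟨⟨a, ha, hwalk⟩, hmin⟩ := hv
  obtain ⟨b, hab, hbv⟩ := walkLen_succ_iff_right.1 hwalk
  refine ⟨b, ⟨⟨a, ha, hab⟩, fun d' hd' ⟨a', ha', hwalk'⟩ => ?_⟩, hbv⟩
  exact hmin (d' + 1) (by omega) ⟨a', ha', walkLen_succ_iff_right.2 ⟨b, hwalk', hbv⟩⟩

theorem mem_of_forall_arc_mem {S : Set V} (hAS : A ⊆ S)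
    (hS : ∀ x ∈ S, ∀ y, E x y → y ∈ S) (hv : v ∈ Nd E A d) : v ∈ S := by
  obtain ⟨⟨a, ha, hwalk⟩, -⟩ := hv
  exact WalkLen.mem_of_forall_arc_mem hS (hAS ha) hwalk

theorem arcFree_two (hE : ArcLocallyInSemicomplete E) (hback : NoBack E A (Nd E A 2)) :
    ArcFree E (Nd E A 2) := by
  intro u hu v hv huv
  obtain ⟨b, hb, hbv⟩ := exists_pred hv
  obtain ⟨q, hq, hqb⟩ := exists_pred hb
  have hqA := mem_of_zero hq
  rcases hE b v hbv q u hqb huv with rfl | hqu | huq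
  · exact not_mem hu (by norm_num) hqA
  · exact not_walkLen hu one_lt_two hqA (walkLen_one.2 hqu)
  · exact hback q hqA u hu huq

theorem arcFree_succ (hE : ArcLocallyInSemicomplete E) {W : Set V} (hW : BipartiteOn E W)
    (hdW : Nd E A d ⊆ W) (hd1W : Nd E A (d + 1) ⊆ W) (hstable : Stable E (Nd E A d)) :
    ArcFree E (Nd E A (d + 1)) := by
  intro u hu v hv huv
  obtain ⟨a, ha, hau⟩ := exists_pred hu
  obtain ⟨b, hb, hbv⟩ := exists_pred hv
  rcases eq_or_ne a b with rfl | hab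
  · exact BipartiteOn.not_triangle hW (hdW ha) (hd1W hu) (hd1W hv)
      (Or.inl hau) (Or.inl huv) (Or.inl hbv)
  · exact hstable a ha b hb hab ((hE u v huv a b hau hbv).resolve_left hab)

end Nd

theorem StructPartition.Nd_subset {V1 V2 V3 : Set V} {k : ℕ} {X : ZMod k → Set V}
    (h : StructPartition E V1 V2 V3 k X) {d : ℕ} (hd : 1 ≤ d) : Nd E V2 d ⊆ V3 := by
  obtain ⟨hcover, -, -, -, hdom, hnb13, -⟩ := h
  have hclosed : ∀ x ∈ V2 ∪ V3, ∀ y, E x y → y ∈ V2 ∪ V3 := by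
    intro x hx y hxy
    have hy : y ∈ V1 ∪ V2 ∪ V3 := hcover ▸ mem_univ y
    rcases hy with (hy1 | hy2) | hy3
    · exact (hx.elim (hdom.2 y hy1 x) (hnb13 y hy1 x) hxy).elim
    · exact Or.inl hy2
    · exact Or.inr hy3
  intro v hv
  exact (Nd.mem_of_forall_arc_mem subset_union_left hclosed hv).resolve_left (Nd.not_mem hv hd)

end Paper

open Paper in
theorem stmt13_general {V : Type*} (E : V → V → Prop)
    (hALI : ArcLocallyInSemicomplete E) (V1 V2 V3 : Set V)
    (k : ℕ) (X : ZMod k → Set V)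
    (hstruct : StructPartition E V1 V2 V3 k X) :
    ∀ d : ℕ, 2 ≤ d → Stable E (Nd E V2 d) := by
  have hV3 : ∀ {d}, 1 ≤ d → Nd E V2 d ⊆ V3 := StructPartition.Nd_subset hstruct
  obtain ⟨-, -, -, -, -, -, hback, -, -, -, hbip⟩ := hstruct
  intro d hd
  refine ArcFree.stable ?_
  induction d, hd using Nat.le_induction with
  | base => exact Nd.arcFree_two hALI fun a ha u hu => hback a ha u (hV3 one_le_two hu)
  | succ d _ ih =>
    exact Nd.arcFree_succ hALI hbip (hV3 (by omega)) (hV3 (by omega)) ih.stable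

open Paper in
theorem stmt13 {V : Type*} [Fintype V] (E : V → V → Prop)
    (hALI : ArcLocallyInSemicomplete E) (V1 V2 V3 : Set V)
    (k : ℕ) (X : ZMod k → Set V)
    (hstruct : StructPartition E V1 V2 V3 k X) :
    ∀ d : ℕ, 2 ≤ d → Stable E (Nd E V2 d) :=
  stmt13_general E hALI V1 V2 V3 k X hstruct
end

section
/- Let D be an arc-locally in-semicomplete digraph with vertex partition (V₁, V₂, V₃) as in the structure theorem, where D[V₂] is an odd extended cycle Q[X₁,...,X_k] of length k ≥ 5. Then there are no vertices x_i ∈ X_i, x_j ∈ X_j with i ≠ j and a vertex y ∈ V₃ such that both x_i and x_j dominate y. -/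
open Set

/-!
Let `xᵢ ∈ Xᵢ` and `xⱼ ∈ Xⱼ` both dominate `y`. Some `a ∈ X_{i-1}` dominates `xᵢ`, so by arc-local
in-semicompleteness applied to the arc `xᵢ → y`, the vertices `a` and `xⱼ` are equal or adjacent;
inside the extended cycle this forces `i - j ∈ {1, 2}`. By symmetry also `j - i ∈ {1, 2}`, so `k`
divides one of `2, 3, 4`, which is impossible for `k ≥ 5`.
-/

namespace ZMod

lemma natCast_ne_zero_of_pos_of_lt {k n : ℕ} (h0 : 0 < n) (hn : n < k) :
    (n : ZMod k) ≠ 0 := fun h =>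
  absurd (Nat.le_of_dvd h0 ((natCast_eq_zero_iff n k).mp h)) (by omega)

lemma not_sub_mem_one_two_of_sub_mem_one_two {k : ℕ} (hk : 5 ≤ k) {a b : ZMod k}
    (hab : a - b = 1 ∨ a - b = 2) : ¬ (b - a = 1 ∨ b - a = 2) := by
  intro hba
  have hsum : (a - b) + (b - a) = 0 := by ring
  obtain ⟨n, hn0, hnk, hn⟩ : ∃ n : ℕ, 0 < n ∧ n < k ∧ (n : ZMod k) = 0 := by
    rcases hab with hab | hab <;> rcases hba with hba | hba <;> rw [hab, hba] at hsum
    exacts [⟨2, by omega, by omega, by push_cast; linear_combination hsum⟩,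
      ⟨3, by omega, by omega, by push_cast; linear_combination hsum⟩,
      ⟨3, by omega, by omega, by push_cast; linear_combination hsum⟩,
      ⟨4, by omega, by omega, by push_cast; linear_combination hsum⟩]
  exact natCast_ne_zero_of_pos_of_lt hn0 hnk hn

end ZMod

namespace Paper

variable {V : Type*} {E : V → V → Prop} {k : ℕ} {X : ZMod k → Set V} {W : Set V}

namespace ExtCycleOn

lemma mem_of_mem_part (hX : ExtCycleOn E k X W) {i : ZMod k} {v : V} (hv : v ∈ X i) : v ∈ W :=
  hX.1 ▸ mem_iUnion.mpr ⟨i, hv⟩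

lemma part_unique (hX : ExtCycleOn E k X W) {i j : ZMod k} {v : V} (hi : v ∈ X i)
    (hj : v ∈ X j) : i = j := by
  by_contra hij
  exact disjoint_left.mp (hX.2.1 i j hij) hi hj

lemma eq_add_one_of_arc (hX : ExtCycleOn E k X W) {i j : ZMod k} {u v : V} (hu : u ∈ X i)
    (hv : v ∈ X j) (huv : E u v) : j = i + 1 := by
  obtain ⟨m, hum, hvm⟩ := (hX.2.2.2.2 u (hX.mem_of_mem_part hu) v (hX.mem_of_mem_part hv)).mp huv
  rw [hX.part_unique hu hum]
  exact hX.part_unique hv hvm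

lemma exists_arc_from_pred (hX : ExtCycleOn E k X W) {i : ZMod k} {v : V} (hv : v ∈ X i) :
    ∃ a ∈ X (i - 1), E a v := by
  obtain ⟨a, ha⟩ := hX.2.2.1 (i - 1)
  refine ⟨a, ha, (hX.2.2.2.2 a (hX.mem_of_mem_part ha) v (hX.mem_of_mem_part hv)).mpr
    ⟨i - 1, ha, ?_⟩⟩
  rwa [sub_add_cancel]

end ExtCycleOn

lemma ArcLocallyInSemicomplete.sub_eq_one_or_two_of_common_outNeighbor
    (hE : ArcLocallyInSemicomplete E) (hX : ExtCycleOn E k X W) {i j : ZMod k} {xi xj y : V}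
    (hij : i ≠ j) (hxi : xi ∈ X i) (hxj : xj ∈ X j) (hxiy : E xi y) (hxjy : E xj y) :
    i - j = 1 ∨ i - j = 2 := by
  obtain ⟨a, ha, haxi⟩ := hX.exists_arc_from_pred hxi
  rcases hE xi y hxiy a xj haxi hxjy with rfl | haxj | hxja
  · left
    rw [hX.part_unique hxj ha]
    ring
  · exact absurd (by simpa using hX.eq_add_one_of_arc ha hxj haxj) (Ne.symm hij)
  · right
    linear_combination hX.eq_add_one_of_arc hxj ha hxja

end Paper

open Paper in
theorem stmt14_general {V : Type*} (E : V → V → Prop)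
    (hALI : ArcLocallyInSemicomplete E) (V1 V2 V3 : Set V)
    (k : ℕ) (X : ZMod k → Set V)
    (hstruct : StructPartition E V1 V2 V3 k X) :
    ¬ ∃ (i j : ZMod k) (xi xj y : V), i ≠ j ∧ xi ∈ X i ∧ xj ∈ X j ∧
      y ∈ V3 ∧ E xi y ∧ E xj y := by
  rintro ⟨i, j, xi, xj, y, hij, hxi, hxj, -, hxiy, hxjy⟩
  obtain ⟨-, -, -, -, -, -, -, hk, -, hX, -⟩ := hstruct
  exact ZMod.not_sub_mem_one_two_of_sub_mem_one_two hk
    (hALI.sub_eq_one_or_two_of_common_outNeighbor hX hij hxi hxj hxiy hxjy)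
    (hALI.sub_eq_one_or_two_of_common_outNeighbor hX hij.symm hxj hxi hxjy hxiy)

open Paper in
theorem stmt14 {V : Type*} [Fintype V] (E : V → V → Prop)
    (hALI : ArcLocallyInSemicomplete E) (V1 V2 V3 : Set V)
    (k : ℕ) (X : ZMod k → Set V)
    (hstruct : StructPartition E V1 V2 V3 k X) :
    ¬ ∃ (i j : ZMod k) (xi xj y : V), i ≠ j ∧ xi ∈ X i ∧ xj ∈ X j ∧
      y ∈ V3 ∧ E xi y ∧ E xj y :=
  stmt14_general E hALI V1 V2 V3 k X hstruct
end

section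
/- Let D be an arc-locally in-semicomplete digraph with vertex partition (V₁, V₂, V₃) as in the structure theorem, where D[V₂] is an odd extended cycle Q[X₁,...,X_k] of length k ≥ 5. Then N⁺(X_i) is a stable set for every i ∈ {1,...,k}, and there is no edge from N⁺(X_{i+1}) to N⁺(X_i) (indices mod k), where N⁺(X_i) denotes the out-neighborhood of X_i outside X_i intersected with V₃. -/
open Set

/-!
Let `u → v` be an edge inside `V₃` with `v` dominated by `x ∈ X_a`, and pick `x' ∈ X_{a-1}`.
Arc-local in-semicompleteness applied to `x → v` makes `x'` and `u` adjacent, and `V₂ ⇒ V₃`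
forces `x' → u`. On the other hand, two vertices of `V₂` with a common out-neighbour lie in
the same class `X_i` once `k ≥ 5`, so every in-neighbour of `u` in `V₂` lies in `X_{a-1}`.
An edge of `N⁺(X_i) ∩ V₃` or from `N⁺(X_{i+1}) ∩ V₃` to `N⁺(X_i) ∩ V₃` would put an
in-neighbour of `u` in `X_i` resp. `X_{i+1}` instead.
-/

namespace Paper

lemma natCast_ne_zero_of_lt {k m : ℕ} (hm : 0 < m) (hmk : m < k) : (m : ZMod k) ≠ 0 := by
  rw [Ne, ZMod.natCast_eq_zero_iff]
  exact fun h => absurd (Nat.le_of_dvd hm h) (by omega)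

namespace ExtCycleOn

variable {V : Type*} {E : V → V → Prop} {k : ℕ} {X : ZMod k → Set V} {W : Set V}

lemma mem_of_mem_class (hC : ExtCycleOn E k X W) {i : ZMod k} {x : V} (hx : x ∈ X i) :
    x ∈ W :=
  hC.1 ▸ mem_iUnion_of_mem i hx

lemma class_eq (hC : ExtCycleOn E k X W) {a b : ZMod k} {x : V} (ha : x ∈ X a)
    (hb : x ∈ X b) : a = b := by
  by_contra h
  exact disjoint_left.mp (hC.2.1 a b h) ha hb

lemma edge_iff (hC : ExtCycleOn E k X W) {a b : ZMod k} {x y : V} (hx : x ∈ X a)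
    (hy : y ∈ X b) : E x y ↔ b = a + 1 := by
  rw [hC.2.2.2.2 x (hC.mem_of_mem_class hx) y (hC.mem_of_mem_class hy)]
  constructor
  · rintro ⟨j, hxj, hyj⟩
    rw [hC.class_eq hx hxj, hC.class_eq hy hyj]
  · rintro rfl
    exact ⟨a, hx, hy⟩

-- Arc-local in-semicompleteness at `s → u` makes `t` adjacent or equal to a predecessor of `s`.
lemma eq_sub_one_or_eq_or_eq_sub_two_of_common_out (hC : ExtCycleOn E k X W)
    (hALI : ArcLocallyInSemicomplete E) {a b : ZMod k} {s t u : V} (hs : s ∈ X a)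
    (ht : t ∈ X b) (hsu : E s u) (htu : E t u) : b = a - 1 ∨ b = a ∨ b = a - 2 := by
  obtain ⟨r, hr⟩ := hC.2.2.1 (a - 1)
  have hrs : E r s := (hC.edge_iff hr hs).mpr (by ring)
  rcases hALI s u hsu r t hrs htu with rfl | hrt | htr
  · exact Or.inl (hC.class_eq ht hr)
  · exact Or.inr (Or.inl (by linear_combination (hC.edge_iff hr ht).mp hrt))
  · exact Or.inr (Or.inr (by linear_combination -(hC.edge_iff ht hr).mp htr))

lemma class_eq_of_common_out (hC : ExtCycleOn E k X W) (hALI : ArcLocallyInSemicomplete E)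
    (hk : 5 ≤ k) {a b : ZMod k} {s t u : V} (hs : s ∈ X a) (ht : t ∈ X b) (hsu : E s u)
    (htu : E t u) : b = a := by
  have hne : ∀ m : ℕ, 0 < m → m < 5 → (m : ZMod k) ≠ 0 :=
    fun m hm hm5 => natCast_ne_zero_of_lt hm (by omega)
  rcases hC.eq_sub_one_or_eq_or_eq_sub_two_of_common_out hALI hs ht hsu htu with h | h | h <;>
    rcases hC.eq_sub_one_or_eq_or_eq_sub_two_of_common_out hALI ht hs htu hsu with h' | h' | h'
  -- The two disjunctions point in opposite directions: mixing them gives `2`, `3` or `4 = 0`.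
  all_goals first
    | assumption
    | exact h'.symm
    | exact absurd (by linear_combination h + h') (hne 2 (by norm_num) (by norm_num))
    | exact absurd (by linear_combination h + h') (hne 3 (by norm_num) (by norm_num))
    | exact absurd (by linear_combination h + h') (hne 4 (by norm_num) (by norm_num))

lemma class_eq_sub_one_of_edge (hC : ExtCycleOn E k X W) (hALI : ArcLocallyInSemicomplete E)
    (hk : 5 ≤ k) {U : Set V} (hWU : Disjoint W U) (hNB : NoBack E W U) {a b : ZMod k}
    {u v x y : V} (hu : u ∈ U) (huv : E u v) (hx : x ∈ X a) (hxv : E x v) (hy : y ∈ X b)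
    (hyu : E y u) : b = a - 1 := by
  obtain ⟨x', hx'⟩ := hC.2.2.1 (a - 1)
  have hx'x : E x' x := (hC.edge_iff hx' hx).mpr (by ring)
  have hx'W : x' ∈ W := hC.mem_of_mem_class hx'
  have hx'u : E x' u := by
    rcases hALI x v hxv x' u hx'x huv with rfl | h | h
    · exact absurd hu (disjoint_left.mp hWU hx'W)
    · exact h
    · exact absurd h (hNB x' hx'W u hu)
  exact hC.class_eq_of_common_out hALI hk hx' hy hx'u hyu

end ExtCycleOn

end Paper

open Paper in
theorem stmt15_general {V : Type*} (E : V → V → Prop)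
    (hALI : ArcLocallyInSemicomplete E) (V1 V2 V3 : Set V)
    (k : ℕ) (X : ZMod k → Set V)
    (hstruct : StructPartition E V1 V2 V3 k X) :
    ∀ i : ZMod k, Stable E (NplusSet E (X i) ∩ V3) ∧
      ∀ u ∈ NplusSet E (X (i + 1)) ∩ V3, ∀ v ∈ NplusSet E (X i) ∩ V3, ¬ E u v := by
  obtain ⟨-, -, -, h23, -, -, hNB, hk, -, hC, -⟩ := hstruct
  have hpred : ∀ {a b : ZMod k} {u v : V}, u ∈ NplusSet E (X b) ∩ V3 →
      v ∈ NplusSet E (X a) ∩ V3 → E u v → b = a - 1 := by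
    rintro a b u v ⟨⟨-, y, hy, hyu⟩, hu⟩ ⟨⟨-, x, hx, hxv⟩, -⟩ huv
    exact hC.class_eq_sub_one_of_edge hALI hk h23 hNB hu huv hx hxv hy hyu
  have h1 : ((1 : ℕ) : ZMod k) ≠ 0 := natCast_ne_zero_of_lt one_pos (by omega)
  have h2 : ((2 : ℕ) : ZMod k) ≠ 0 := natCast_ne_zero_of_lt two_pos (by omega)
  intro i
  refine ⟨fun u hu v hv _ huv => ?_, fun u hu v hv huv => ?_⟩
  · rcases huv with h | h
    · exact h1 (by linear_combination hpred hu hv h)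
    · exact h1 (by linear_combination hpred hv hu h)
  · exact h2 (by linear_combination hpred hu hv huv)

open Paper in
theorem stmt15 {V : Type*} [Fintype V] (E : V → V → Prop)
    (hALI : ArcLocallyInSemicomplete E) (V1 V2 V3 : Set V)
    (k : ℕ) (X : ZMod k → Set V)
    (hstruct : StructPartition E V1 V2 V3 k X) :
    ∀ i : ZMod k, Stable E (NplusSet E (X i) ∩ V3) ∧
      ∀ u ∈ NplusSet E (X (i + 1)) ∩ V3, ∀ v ∈ NplusSet E (X i) ∩ V3, ¬ E u v :=
  stmt15_general E hALI V1 V2 V3 k X hstruct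
end

section
/- Every extended cycle D = Q[X₁,...,X_k] that contains no induced blocking odd cycle satisfies the BE-property: for every maximum stable set S of D there is a path partition of V(D) into directed paths, each containing exactly one vertex of S, with every vertex of S starting or ending its path. -/
open Set

/-!
Let `S` be a maximum stable set. Cut the vertices outside `S` into *units*, short directed paths,
and attach to each unit a distinct vertex of `S` at its start or at its end; the unused vertices of
`S` stay trivial paths. Such an assignment exists by Hall's theorem as soon as every unit has a
representative in a fixed stable set `R` all of whose `S`-neighbours attach to the unit: the
representatives `T` of any family of units form a stable set outside `S`, and exchanging
`N(T) ∩ S` for `T` shows `|T| ≤ |N(T) ∩ S|` by maximality of `S`.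

In an extended cycle, classes are sets of non-adjacent twins, so `S` is a union of classes
`X_c, c ∈ J`, and between two consecutive `J`-classes there are one or two classes (otherwise a
class would have no neighbour in `S`). A gap of one class contributes its vertices as units. In a
gap `X_c, X_{c+1}` the two classes are paired up into arcs, the leftover vertices of the larger
class forming single units, and the representatives are taken in the larger class; larger classes
of different gaps are never adjacent.
-/

namespace Paper

variable {V : Type*} {E : V → V → Prop} {k : ℕ}

theorem adj_comm {u v : V} : Adj E u v ↔ Adj E v u := or_comm

def Attaches (E : V → V → Prop) (y : V) (q : List V) : Prop :=
  (∃ a ∈ q.head?, E y a) ∨ ∃ b ∈ q.getLast?, E b y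

theorem IsPath.exists_perm_cons {q : List V} {y : V} (hq : IsPath E q) (hy : Attaches E y q) :
    ∃ p : List V, p.Perm (y :: q) ∧ IsPath E p ∧ (p.head? = some y ∨ p.getLast? = some y) := by
  obtain ⟨hne, hchain⟩ := hq
  rcases hy with ⟨a, ha, hya⟩ | ⟨b, hb, hby⟩
  · obtain ⟨a', q', rfl⟩ := List.exists_cons_of_ne_nil hne
    obtain rfl : a' = a := by simpa using ha
    exact ⟨y :: a' :: q', .refl _, ⟨List.cons_ne_nil _ _, List.isChain_cons_cons.2 ⟨hya, hchain⟩⟩,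
      .inl rfl⟩
  · refine ⟨q ++ [y], List.perm_append_singleton y q, ⟨by simp, ?_⟩, .inr List.getLast?_concat⟩
    exact List.isChain_append.2 ⟨hchain, List.isChain_singleton y, fun x hx z hz => by
      obtain rfl : x = b := Option.some_injective _ (hx.symm.trans hb)
      obtain rfl : z = y := by simpa [eq_comm] using hz
      exact hby⟩

section MaxStable

variable {S : Set V}

theorem MaxStableOn.ncard_le_ncard_adj [Finite V] (hS : MaxStableOn E univ S) {T : Set V}
    (hT : Stable E T) (hTS : Disjoint T S) :
    T.ncard ≤ {y ∈ S | ∃ z ∈ T, Adj E y z}.ncard := by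
  set N := {y ∈ S | ∃ z ∈ T, Adj E y z}
  have hNS : N ⊆ S := sep_subset _ _
  have hstable : Stable E (S \ N ∪ T) := by
    rintro u (⟨huS, huN⟩ | huT) v (⟨hvS, hvN⟩ | hvT) huv
    · exact hS.1.2 u huS v hvS huv
    · exact fun h => huN ⟨huS, v, hvT, h⟩
    · exact fun h => hvN ⟨hvS, u, huT, adj_comm.1 h⟩
    · exact hT u huT v hvT huv
  have hle := hS.2 _ ⟨subset_univ _, hstable⟩
  rw [ncard_union_eq (hTS.symm.mono_left sdiff_subset), ncard_sdiff hNS] at hle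
  have := ncard_le_ncard hNS
  omega

theorem MaxStableOn.exists_adj [Finite V] (hS : MaxStableOn E univ S) {v : V} (hv : v ∉ S) :
    ∃ y ∈ S, Adj E y v := by
  have h := hS.ncard_le_ncard_adj (T := {v}) (fun a ha b hb hab => absurd (ha.trans hb.symm) hab)
    (disjoint_singleton_left.2 hv)
  rw [ncard_singleton] at h
  obtain ⟨y, hyS, z, rfl, hyz⟩ :=
    nonempty_of_ncard_ne_zero (by omega : {y ∈ S | ∃ z ∈ ({v} : Set V), Adj E y z}.ncard ≠ 0)
  exact ⟨y, hyS, hyz⟩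

theorem MaxStableOn.exists_injective_attaches [Fintype V] (hS : MaxStableOn E univ S)
    {ι : Type*} (q : ι → List V) (hq : Pairwise fun i j => (q i).Disjoint (q j))
    (hqS : ∀ i, ∀ v ∈ q i, v ∉ S) {R : Set V} (hR : Stable E R)
    (hrep : ∀ i, ∃ r ∈ q i, r ∈ R ∧ ∀ y ∈ S, Adj E y r → Attaches E y (q i)) :
    ∃ f : ι → V, Function.Injective f ∧ ∀ i, f i ∈ S ∧ Attaches E (f i) (q i) := by
  classical
  choose r hrq hrR hratt using hrep
  let t : ι → Finset V := fun i => {y | y ∈ S ∧ Attaches E y (q i)}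
  obtain ⟨f, hf, hft⟩ := (Finset.all_card_le_biUnion_card_iff_exists_injective t).1 fun s => by
    have hrinj : InjOn r s := fun i _ j _ hij => by_contra fun hne => hq hne (hrq i) (hij ▸ hrq j)
    calc s.card = (s.image r).card := (Finset.card_image_of_injOn hrinj).symm
      _ = (↑(s.image r) : Set V).ncard := (ncard_coe_finset _).symm
      _ ≤ {y ∈ S | ∃ z ∈ (↑(s.image r) : Set V), Adj E y z}.ncard := by
        refine hS.ncard_le_ncard_adj ?_ ?_
        · intro u hu v hv
          simp only [Finset.coe_image, mem_image] at hu hv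
          obtain ⟨i, -, rfl⟩ := hu
          obtain ⟨j, -, rfl⟩ := hv
          exact hR _ (hrR i) _ (hrR j)
        · rw [Set.disjoint_left]
          simp only [Finset.coe_image, mem_image]
          rintro _ ⟨i, -, rfl⟩
          exact hqS i _ (hrq i)
      _ ≤ (↑(s.biUnion t) : Set V).ncard := by
        refine ncard_le_ncard ?_
        rintro y ⟨hyS, z, hz, hyz⟩
        simp only [Finset.coe_image, mem_image] at hz
        obtain ⟨i, hi, rfl⟩ := hz
        simp only [Finset.coe_biUnion, Finset.mem_coe, mem_iUnion]
        exact ⟨i, hi, by simpa [t] using ⟨hyS, hratt i y hyS hyz⟩⟩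
      _ = (s.biUnion t).card := ncard_coe_finset _
  exact ⟨f, hf, fun i => by simpa [t] using hft i⟩

theorem nodup_flatten_ofFn_append_singletons {n : ℕ} {p : Fin n → List V} {l : List V}
    (hnd : ∀ i, (p i).Nodup) (hdisj : Pairwise fun i j => (p i).Disjoint (p j)) (hl : l.Nodup)
    (hlp : ∀ y ∈ l, ∀ i, y ∉ p i) : (List.ofFn p ++ l.map ([·])).flatten.Nodup := by
  rw [List.flatten_append, List.nodup_append, ← List.flatMap_def, List.flatMap_singleton']
  refine ⟨List.nodup_flatten.2 ⟨fun l hl => ?_, List.pairwise_ofFn.2 fun i j hij => hdisj hij.ne⟩,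
    hl, fun a ha b hb hab => ?_⟩
  · obtain ⟨i, rfl⟩ := List.mem_ofFn.1 hl
    exact hnd i
  · obtain ⟨_, hi, ha⟩ := List.mem_flatten.1 ha
    obtain ⟨i, rfl⟩ := List.mem_ofFn.1 hi
    exact hlp b hb i (hab ▸ ha)

theorem exists_bePartOn_of_disjoint_paths [Fintype V] {n : ℕ} (p : Fin n → List V)
    (hp : ∀ i, IsPath E (p i)) (hnd : ∀ i, (p i).Nodup)
    (hdisj : Pairwise fun i j => (p i).Disjoint (p j)) (hcover : ∀ v ∉ S, ∃ i, v ∈ p i)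
    (horth : ∀ i, ∃! v, v ∈ p i ∧ v ∈ S)
    (hend : ∀ i, ∀ v ∈ p i, v ∈ S → (p i).head? = some v ∨ (p i).getLast? = some v) :
    ∃ P, BEPartOn E univ S P := by
  classical
  let rest : List V := {y | y ∈ S ∧ ∀ i, y ∉ p i}.toFinset.toList
  have hrest : ∀ y, y ∈ rest ↔ y ∈ S ∧ ∀ i, y ∉ p i := by simp [rest]
  have hP : ∀ l ∈ List.ofFn p ++ rest.map ([·]), (∃ i, l = p i) ∨ ∃ y ∈ S, l = [y] := by
    intro l hl
    rcases List.mem_append.1 hl with hl | hl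
    · obtain ⟨i, rfl⟩ := List.mem_ofFn.1 hl
      exact .inl ⟨i, rfl⟩
    · obtain ⟨y, hy, rfl⟩ := List.mem_map.1 hl
      exact .inr ⟨y, ((hrest y).1 hy).1, rfl⟩
  refine ⟨List.ofFn p ++ rest.map ([·]), ⟨⟨fun l hl => ?_, nodup_flatten_ofFn_append_singletons
    hnd hdisj (Finset.nodup_toList _) fun y hy => ((hrest y).1 hy).2, fun v => ?_⟩,
    fun l hl => ?_⟩, fun l hl v hv hvS => ?_⟩
  · rcases hP l hl with ⟨i, rfl⟩ | ⟨y, -, rfl⟩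
    · exact hp i
    · exact ⟨List.cons_ne_nil _ _, List.isChain_singleton y⟩
  · simp only [mem_univ, iff_true, List.mem_flatten]
    by_cases hv : ∃ i, v ∈ p i
    · obtain ⟨i, hi⟩ := hv
      exact ⟨p i, List.mem_append_left _ (List.mem_ofFn.2 ⟨i, rfl⟩), hi⟩
    · refine ⟨[v], List.mem_append_right _ (List.mem_map_of_mem ((hrest v).2 ?_)),
        List.mem_singleton_self v⟩
      rw [not_exists] at hv
      exact ⟨by_contra fun hvS => (hcover v hvS).elim hv, hv⟩
  · rcases hP l hl with ⟨i, rfl⟩ | ⟨y, hyS, rfl⟩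
    · exact horth i
    · exact ⟨y, ⟨List.mem_singleton_self y, hyS⟩, fun v hv => List.mem_singleton.1 hv.1⟩
  · rcases hP l hl with ⟨i, rfl⟩ | ⟨y, -, rfl⟩
    · exact hend i v hv hvS
    · exact .inl (by rw [List.mem_singleton.1 hv]; rfl)

theorem exists_bePartOn_of_attaches [Fintype V] {n : ℕ} (q : Fin n → List V)
    (hq : ∀ i, IsPath E (q i)) (hnd : ∀ i, (q i).Nodup)
    (hdisj : Pairwise fun i j => (q i).Disjoint (q j)) (hcover : ∀ v, v ∉ S ↔ ∃ i, v ∈ q i)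
    (f : Fin n → V) (hf : Function.Injective f) (hfS : ∀ i, f i ∈ S ∧ Attaches E (f i) (q i)) :
    ∃ P, BEPartOn E univ S P := by
  choose p hperm hpath hend using fun i => (hq i).exists_perm_cons (hfS i).2
  have hmemp : ∀ i v, v ∈ p i ↔ v = f i ∨ v ∈ q i :=
    fun i v => (hperm i).mem_iff.trans List.mem_cons
  have hqS : ∀ i, ∀ v ∈ q i, v ∉ S := fun i v hv => (hcover v).2 ⟨i, hv⟩
  have hSp : ∀ i v, v ∈ p i → v ∈ S → v = f i := fun i v hv hvS =>
    ((hmemp i v).1 hv).resolve_right fun h => hqS i v h hvS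
  refine exists_bePartOn_of_disjoint_paths p hpath (fun i => ?_) (fun i j hij v hvi hvj => ?_)
    (fun v hv => ?_) (fun i => ⟨f i, ⟨(hmemp i _).2 (.inl rfl), (hfS i).1⟩,
      fun v hv => hSp i v hv.1 hv.2⟩) (fun i v hv hvS => hSp i v hv hvS ▸ hend i)
  · exact (hperm i).nodup_iff.2 (List.nodup_cons.2 ⟨fun h => hqS i _ h (hfS i).1, hnd i⟩)
  · rcases (hmemp i v).1 hvi with rfl | hvi <;> rcases (hmemp j _).1 hvj with h | hvj
    · exact hij (hf h)
    · exact hqS j _ hvj (hfS i).1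
    · exact hqS i _ hvi (h ▸ (hfS j).1)
    · exact hdisj hij hvi hvj
  · obtain ⟨i, hi⟩ := (hcover v).1 hv
    exact ⟨i, (hmemp i v).2 (.inr hi)⟩

theorem MaxStableOn.exists_bePartOn [Fintype V] (hS : MaxStableOn E univ S)
    (U : List (List V)) (hU : ∀ q ∈ U, IsPath E q) (hnodup : U.flatten.Nodup)
    (hmem : ∀ v, v ∈ U.flatten ↔ v ∉ S) {R : Set V} (hR : Stable E R)
    (hrep : ∀ q ∈ U, ∃ r ∈ q, r ∈ R ∧ ∀ y ∈ S, Adj E y r → Attaches E y q) :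
    ∃ P, BEPartOn E univ S P := by
  obtain ⟨hnd, hpw⟩ := List.nodup_flatten.1 hnodup
  have hdisj : Pairwise fun i j : Fin U.length => U[i].Disjoint U[j] := by
    intro i j hij
    rcases lt_or_gt_of_ne hij with h | h
    · exact List.pairwise_iff_getElem.1 hpw i j i.2 j.2 h
    · exact (List.pairwise_iff_getElem.1 hpw j i j.2 i.2 h).symm
  have hcover : ∀ v, v ∉ S ↔ ∃ i : Fin U.length, v ∈ U[i] := by
    intro v
    rw [← hmem, List.mem_flatten]
    constructor
    · rintro ⟨l, hl, hv⟩
      obtain ⟨i, hi, rfl⟩ := List.getElem_of_mem hl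
      exact ⟨⟨i, hi⟩, hv⟩
    · rintro ⟨i, hv⟩
      exact ⟨_, List.getElem_mem _, hv⟩
  obtain ⟨f, hf, hfS⟩ := hS.exists_injective_attaches (fun i : Fin U.length => U[i]) hdisj
    (fun i v hv => (hcover v).2 ⟨i, hv⟩) hR (fun i => hrep _ (List.getElem_mem _))
  exact exists_bePartOn_of_attaches _ (fun i => hU _ (List.getElem_mem _))
    (fun i => hnd _ (List.getElem_mem _)) hdisj hcover f hf hfS

end MaxStable

section PairUp

variable {α : Type*}

def pairUp : List α → List α → List (List α)
  | a :: l₁, b :: l₂ => [a, b] :: pairUp l₁ l₂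
  | l₁, [] => l₁.map ([·])
  | [], l₂ => l₂.map ([·])

theorem pairUp_nil_left (l : List α) : pairUp [] l = l.map ([·]) := by
  cases l <;> rfl

theorem pairUp_nil_right (l : List α) : pairUp l [] = l.map ([·]) := by
  cases l <;> rfl

theorem flatten_pairUp_perm (l₁ l₂ : List α) : (pairUp l₁ l₂).flatten.Perm (l₁ ++ l₂) := by
  induction l₁, l₂ using pairUp.induct with
  | case1 a l₁ b l₂ ih =>
    simpa [pairUp] using (ih.cons b).trans List.perm_middle.symm
  | case2 l₁ => simp [pairUp_nil_right, ← List.flatMap_def]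
  | case3 l₂ => simp [pairUp_nil_left, ← List.flatMap_def]

theorem isPath_of_mem_pairUp {R : α → α → Prop} {l₁ l₂ : List α}
    (h : ∀ a ∈ l₁, ∀ b ∈ l₂, R a b) {q : List α} (hq : q ∈ pairUp l₁ l₂) : IsPath R q := by
  induction l₁, l₂ using pairUp.induct with
  | case1 a l₁ b l₂ ih =>
    rcases List.mem_cons.1 hq with rfl | hq
    · exact ⟨List.cons_ne_nil _ _, List.isChain_pair.2 (h a (by simp) b (by simp))⟩
    · exact ih (fun a ha b hb => h a (by simp [ha]) b (by simp [hb])) hq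
  | case2 l₁ =>
    obtain ⟨a, -, rfl⟩ := List.mem_map.1 ((pairUp_nil_right l₁) ▸ hq)
    exact ⟨List.cons_ne_nil _ _, List.isChain_singleton a⟩
  | case3 l₂ =>
    obtain ⟨a, -, rfl⟩ := List.mem_map.1 ((pairUp_nil_left l₂) ▸ hq)
    exact ⟨List.cons_ne_nil _ _, List.isChain_singleton a⟩

theorem exists_head?_eq_of_mem_pairUp {l₁ l₂ : List α} (hlen : l₂.length ≤ l₁.length)
    {q : List α} (hq : q ∈ pairUp l₁ l₂) : ∃ a ∈ l₁, q.head? = some a := by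
  induction l₁, l₂ using pairUp.induct with
  | case1 a l₁ b l₂ ih =>
    rcases List.mem_cons.1 hq with rfl | hq
    · exact ⟨a, by simp, rfl⟩
    · obtain ⟨a', ha', h⟩ := ih (by simpa using hlen) hq
      exact ⟨a', by simp [ha'], h⟩
  | case2 l₁ =>
    obtain ⟨a, ha, rfl⟩ := List.mem_map.1 ((pairUp_nil_right l₁) ▸ hq)
    exact ⟨a, ha, rfl⟩
  | case3 l₂ =>
    obtain ⟨b, -, rfl⟩ := List.mem_map.1 ((pairUp_nil_left l₂) ▸ hq)
    simp_all

theorem exists_getLast?_eq_of_mem_pairUp {l₁ l₂ : List α} (hlen : l₁.length ≤ l₂.length)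
    {q : List α} (hq : q ∈ pairUp l₁ l₂) : ∃ b ∈ l₂, q.getLast? = some b := by
  induction l₁, l₂ using pairUp.induct with
  | case1 a l₁ b l₂ ih =>
    rcases List.mem_cons.1 hq with rfl | hq
    · exact ⟨b, by simp, rfl⟩
    · obtain ⟨b', hb', h⟩ := ih (by simpa using hlen) hq
      exact ⟨b', by simp [hb'], h⟩
  | case2 l₁ =>
    obtain ⟨a, ha, rfl⟩ := List.mem_map.1 ((pairUp_nil_right l₁) ▸ hq)
    simp at hlen
    simp [hlen] at ha
  | case3 l₂ =>
    obtain ⟨b, hb, rfl⟩ := List.mem_map.1 ((pairUp_nil_left l₂) ▸ hq)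
    exact ⟨b, hb, rfl⟩

end PairUp

def IsCycleLabel (E : V → V → Prop) (cls : V → ZMod k) : Prop :=
  ∀ u v, E u v ↔ cls v = cls u + 1

theorem ExtCycleOn.exists_isCycleLabel {X : ZMod k → Set V} (h : ExtCycleOn E k X univ) :
    ∃ cls : V → ZMod k, Function.Surjective cls ∧ IsCycleLabel E cls := by
  obtain ⟨hU, hdisj, hXne, -, hE⟩ := h
  choose cls hcls using fun v => mem_iUnion.1 (hU ▸ mem_univ v)
  have huniq : ∀ v i, v ∈ X i → cls v = i := fun v i hv =>
    by_contra fun hne => Set.disjoint_left.1 (hdisj _ _ hne) (hcls v) hv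
  refine ⟨cls, fun i => (hXne i).imp fun v hv => huniq v i hv, fun u v => ?_⟩
  rw [hE u trivial v trivial]
  constructor
  · rintro ⟨i, hu, hv⟩
    rw [huniq u i hu, huniq v _ hv]
  · intro h
    exact ⟨cls u, hcls u, h ▸ hcls v⟩

section CycleLabel

variable {cls : V → ZMod k} {S : Set V}

theorem IsCycleLabel.adj_iff (hE : IsCycleLabel E cls) {u v : V} :
    Adj E u v ↔ cls v = cls u + 1 ∨ cls u = cls v + 1 :=
  or_congr (hE u v) (hE v u)

theorem IsCycleLabel.not_adj_of_cls_eq (hE : IsCycleLabel E cls) (h1 : (1 : ZMod k) ≠ 0)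
    {u v : V} (huv : cls u = cls v) : ¬ Adj E u v := by
  rw [hE.adj_iff, huv]
  rintro (h | h) <;> exact h1 (left_eq_add.1 h)

theorem IsCycleLabel.mem_iff_exists_cls_eq [Finite V] (hE : IsCycleLabel E cls)
    (h1 : (1 : ZMod k) ≠ 0) (hS : MaxStableOn E univ S) {v : V} :
    v ∈ S ↔ ∃ u ∈ S, cls u = cls v := by
  refine ⟨fun hv => ⟨v, hv, rfl⟩, fun ⟨u, huS, huv⟩ => by_contra fun hv => ?_⟩
  obtain ⟨y, hyS, hyv⟩ := hS.exists_adj hv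
  have hyu : Adj E y u := by rwa [hE.adj_iff, huv, ← hE.adj_iff]
  exact hS.1.2 y hyS u huS (fun hyu' => hE.not_adj_of_cls_eq h1 huv (hyu' ▸ hyv)) hyu

section Dominant

variable (J : Finset (ZMod k))

/-- For class sizes `m`: the larger class of a gap of length two (the first one on ties), or the
only class of a gap of length one. -/
def IsDominant (m : ZMod k → ℕ) (c : ZMod k) : Prop :=
  c ∉ J ∧ (c + 1 ∉ J → m (c + 1) ≤ m c) ∧ (c - 1 ∉ J → m (c - 1) < m c)

variable {J}

theorem IsDominant.not_add_one {m : ZMod k → ℕ} {c : ZMod k} (h : IsDominant J m c) :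
    ¬ IsDominant J m (c + 1) := fun h' => by
  have := h.2.1 h'.1
  have := h'.2.2 (by rw [add_sub_cancel_right]; exact h.1)
  rw [add_sub_cancel_right] at this
  omega

theorem IsCycleLabel.stable_isDominant (hE : IsCycleLabel E cls) (J : Finset (ZMod k))
    (m : ZMod k → ℕ) :
    Stable E {v | IsDominant J m (cls v)} := by
  rintro u hu v hv - (huv | hvu)
  · exact hu.not_add_one ((hE u v).1 huv ▸ hv)
  · exact hv.not_add_one ((hE v u).1 hvu ▸ hu)

end Dominant

section Units

variable [Fintype V] (cls) (J : Finset (ZMod k))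

noncomputable def classList (c : ZMod k) : List V :=
  (Finset.univ.filter (cls · = c)).toList

/-- The units of the gap starting at class `c`; a gap has at most two classes. -/
noncomputable def gapUnits (c : ZMod k) : List (List V) :=
  if c ∉ J ∧ c - 1 ∈ J then
    pairUp (classList cls c) (if c + 1 ∈ J then [] else classList cls (c + 1))
  else []

noncomputable def units [NeZero k] : List (List V) :=
  ((Finset.univ : Finset (ZMod k)).toList.map (gapUnits cls J)).flatten

variable {cls J}

theorem mem_classList {c : ZMod k} {v : V} : v ∈ classList cls c ↔ cls v = c := by
  simp [classList]

theorem mem_flatten_gapUnits {c : ZMod k} {v : V} :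
    v ∈ (gapUnits cls J c).flatten ↔
      c ∉ J ∧ c - 1 ∈ J ∧ (cls v = c ∨ cls v = c + 1 ∧ c + 1 ∉ J) := by
  unfold gapUnits
  split_ifs with hc hc1
  · simp [(flatten_pairUp_perm _ _).mem_iff, mem_classList, hc, hc1]
  · simp [(flatten_pairUp_perm _ _).mem_iff, mem_classList, hc, hc1]
  · simp only [List.flatten_nil, List.not_mem_nil, false_iff]
    exact fun h => hc ⟨h.1, h.2.1⟩

theorem nodup_flatten_gapUnits (h1 : (1 : ZMod k) ≠ 0) (c : ZMod k) :
    (gapUnits cls J c).flatten.Nodup := by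
  unfold gapUnits
  split_ifs with hc hc1
  · refine (flatten_pairUp_perm _ _).nodup_iff.2 ?_
    rw [List.append_nil]
    exact Finset.nodup_toList _
  · refine (flatten_pairUp_perm _ _).nodup_iff.2 (List.nodup_append.2
      ⟨Finset.nodup_toList _, Finset.nodup_toList _, fun a ha b hb hab => ?_⟩)
    rw [mem_classList] at ha hb
    subst hab
    exact h1 (left_eq_add.1 (ha.symm.trans hb))
  · exact List.nodup_nil

theorem IsCycleLabel.isPath_of_mem_gapUnits (hE : IsCycleLabel E cls) {c : ZMod k}
    {q : List V} (hq : q ∈ gapUnits cls J c) : IsPath E q := by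
  unfold gapUnits at hq
  split_ifs at hq with hc hc1
  · exact isPath_of_mem_pairUp (by simp) hq
  · refine isPath_of_mem_pairUp (fun a ha b hb => ?_) hq
    rw [mem_classList] at ha hb
    exact (hE a b).2 (ha ▸ hb)
  · simp at hq

theorem mem_units [NeZero k] {q : List V} : q ∈ units cls J ↔ ∃ c, q ∈ gapUnits cls J c := by
  simp [units]

theorem flatten_units [NeZero k] : (units cls J).flatten =
    ((Finset.univ : Finset (ZMod k)).toList.map fun c => (gapUnits cls J c).flatten).flatten := by
  simp [units, List.flatten_flatten, Function.comp_def]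

theorem nodup_flatten_units [NeZero k] (h1 : (1 : ZMod k) ≠ 0) : (units cls J).flatten.Nodup := by
  rw [flatten_units, List.nodup_flatten, List.pairwise_map]
  refine ⟨by simpa using nodup_flatten_gapUnits h1, (Finset.nodup_toList _).imp
    fun {c c'} hcc' v hv hv' => ?_⟩
  rw [mem_flatten_gapUnits] at hv hv'
  obtain ⟨hc, hc1, hvc⟩ := hv
  obtain ⟨hc', hc1', hvc'⟩ := hv'
  rcases hvc with h | ⟨h, -⟩ <;> rcases hvc' with h' | ⟨h', -⟩
  · exact hcc' (h.symm.trans h')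
  · exact hc' (by rwa [← add_sub_cancel_right c' 1, ← h', h])
  · exact hc (by rwa [← add_sub_cancel_right c 1, ← h, h'])
  · exact hcc' (add_right_cancel (h.symm.trans h'))

theorem mem_flatten_units [NeZero k] (hgap : ∀ c ∉ J, c - 1 ∈ J ∨ c + 1 ∈ J) {v : V} :
    v ∈ (units cls J).flatten ↔ cls v ∉ J := by
  simp only [flatten_units, List.mem_flatten, List.mem_map, Finset.mem_toList, Finset.mem_univ,
    true_and]
  constructor
  · rintro ⟨_, ⟨c, rfl⟩, hv⟩
    obtain ⟨hc, -, h | ⟨h, hc1⟩⟩ := mem_flatten_gapUnits.1 hv <;> rwa [h]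
  · intro hv
    by_cases hv1 : cls v - 1 ∈ J
    · exact ⟨_, ⟨cls v, rfl⟩, mem_flatten_gapUnits.2 ⟨hv, hv1, .inl rfl⟩⟩
    · have hv2 : cls v - 1 - 1 ∈ J := (hgap _ hv1).resolve_right (by rwa [sub_add_cancel])
      exact ⟨_, ⟨cls v - 1, rfl⟩, mem_flatten_gapUnits.2
        ⟨hv1, hv2, .inr ⟨(sub_add_cancel _ _).symm, by rwa [sub_add_cancel]⟩⟩⟩

end Units

section Representatives

variable [Fintype V] {J : Finset (ZMod k)}

/-- The `S`-neighbours of a representative lie in the `J`-class bounding its gap on its side. -/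
theorem IsCycleLabel.exists_rep_of_mem_gapUnits (hE : IsCycleLabel E cls)
    (hJ : ∀ v, v ∈ S ↔ cls v ∈ J) (hgap : ∀ c ∉ J, c - 1 ∈ J ∨ c + 1 ∈ J) {c : ZMod k}
    {q : List V} (hq : q ∈ gapUnits cls J c) :
    ∃ r ∈ q, IsDominant J (fun c => (classList cls c).length) (cls r) ∧
      ∀ y ∈ S, Adj E y r → Attaches E y q := by
  unfold gapUnits at hq
  split_ifs at hq with hc hc1
  · obtain ⟨a, ha, rfl⟩ := List.mem_map.1 ((pairUp_nil_right _) ▸ hq)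
    rw [mem_classList] at ha
    subst ha
    refine ⟨a, List.mem_singleton_self a, ⟨hc.1, fun h => absurd hc1 h, fun h => absurd hc.2 h⟩,
      fun y _ hy => ?_⟩
    rcases hy with h | h
    · exact .inl ⟨a, rfl, h⟩
    · exact .inr ⟨a, rfl, h⟩
  · by_cases hlen : (classList cls (c + 1)).length ≤ (classList cls c).length
    · obtain ⟨a, ha, hqa⟩ := exists_head?_eq_of_mem_pairUp hlen hq
      rw [mem_classList] at ha
      subst ha
      refine ⟨a, List.mem_of_mem_head? hqa, ⟨hc.1, fun _ => hlen, fun h => absurd hc.2 h⟩,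
        fun y hyS hy => .inl ⟨a, hqa, hy.resolve_right fun h => hc1 ?_⟩⟩
      rw [← (hE a y).1 h, ← hJ]
      exact hyS
    · obtain ⟨b, hb, hqb⟩ := exists_getLast?_eq_of_mem_pairUp (le_of_not_ge hlen) hq
      rw [mem_classList] at hb
      have hc2 : c + 1 + 1 ∈ J :=
        (hgap _ hc1).resolve_left (by rw [add_sub_cancel_right]; exact hc.1)
      refine ⟨b, List.mem_of_getLast? hqb, ⟨hb ▸ hc1, fun h => absurd hc2 (hb ▸ h), fun _ => ?_⟩,
        fun y hyS hy => .inr ⟨b, hqb, hy.resolve_left fun h => hc.1 ?_⟩⟩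
      · rw [hb, add_sub_cancel_right]
        exact lt_of_not_ge hlen
      · rw [← add_right_cancel (((hE y b).1 h).symm.trans hb), ← hJ]
        exact hyS
  · simp at hq

theorem IsCycleLabel.exists_bePartOn [NeZero k] (hE : IsCycleLabel E cls) (h1 : (1 : ZMod k) ≠ 0)
    (hsurj : Function.Surjective cls) (hS : MaxStableOn E univ S) :
    ∃ P, BEPartOn E univ S P := by
  classical
  let J : Finset (ZMod k) := (Finset.univ.filter (· ∈ S)).image cls
  have hJ : ∀ v, v ∈ S ↔ cls v ∈ J := fun v => by
    simpa [J] using hE.mem_iff_exists_cls_eq h1 hS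
  have hgap : ∀ c ∉ J, c - 1 ∈ J ∨ c + 1 ∈ J := by
    intro c hc
    obtain ⟨v, rfl⟩ := hsurj c
    obtain ⟨y, hyS, hyv⟩ := hS.exists_adj (mt (hJ v).1 hc)
    rcases hE.adj_iff.1 hyv with h | h
    · exact .inl (by rw [h, add_sub_cancel_right, ← hJ]; exact hyS)
    · exact .inr (by rw [← h, ← hJ]; exact hyS)
  refine hS.exists_bePartOn (units cls J) (fun q hq => ?_) (nodup_flatten_units h1)
    (fun v => (mem_flatten_units hgap).trans (hJ v).not.symm)
    (hE.stable_isDominant J fun c => (classList cls c).length) (fun q hq => ?_)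
  · obtain ⟨c, hq⟩ := mem_units.1 hq
    exact hE.isPath_of_mem_gapUnits hq
  · obtain ⟨c, hq⟩ := mem_units.1 hq
    exact hE.exists_rep_of_mem_gapUnits hJ hgap hq

end Representatives

end CycleLabel

end Paper

open Paper in
theorem stmt17_general {V : Type*} [Fintype V] (E : V → V → Prop)
    (k : ℕ) (hk : 2 ≤ k) (X : ZMod k → Set V)
    (hext : ExtCycleOn E k X Set.univ) :
    BEPropOn E Set.univ := by
  intro S hS
  obtain ⟨cls, hsurj, hE⟩ := hext.exists_isCycleLabel
  have : Fact (1 < k) := ⟨hk⟩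
  exact hE.exists_bePartOn one_ne_zero hsurj hS

open Paper in
theorem stmt17 {V : Type*} [Fintype V] (E : V → V → Prop)
    (k : ℕ) (hk : 2 ≤ k) (X : ZMod k → Set V)
    (hext : ExtCycleOn E k X Set.univ)
    (hnb : ¬ HasInducedBlockingOddCycle E) :
    BEPropOn E Set.univ :=
  stmt17_general E k hk X hext
end

section
/- Every extended cycle D = Q[X₁,...,X_k] satisfies the α-property: for every maximum stable set S of D there exists a path partition of V(D) into directed paths such that each path contains exactly one vertex of S. -/
open Set

/-!
Let `c : V → ZMod k` send each vertex to the index of its class, so that the arcs are exactly the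
pairs `u → v` with `c v = c u + 1`. If `S` is a maximum stable set, then `(S \ N(X_j)) ∪ X_j` is
stable, hence `|X_j \ S| ≤ |S ∩ X_{j+1}| + |S ∩ X_{j-1}|`. Split `X_j \ S`
accordingly into a part `F_j` with `|F_j| ≤ |S ∩ X_{j+1}|` and a rest with at most
`|S ∩ X_{j-1}|` vertices. Then every `x ∈ S ∩ X_i` becomes the middle vertex of a path `u → x → w`,
where `u` runs through `F_{i-1}` and `w` through the rest of `X_{i+1} \ S`, each used once.
-/

namespace Paper

variable {V : Type*} {E : V → V → Prop} {S : Set V}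

theorem Adj.symm {u v : V} (h : Adj E u v) : Adj E v u := Or.symm h

theorem sPartOn_empty : SPartOn E ∅ S [] :=
  ⟨⟨by simp, by simp, by simp⟩, by simp [Orthogonal]⟩

theorem SPartOn.append {W₁ W₂ : Set V} {P₁ P₂ : List (List V)} (h₁ : SPartOn E W₁ S P₁)
    (h₂ : SPartOn E W₂ S P₂) (hW : Disjoint W₁ W₂) : SPartOn E (W₁ ∪ W₂) S (P₁ ++ P₂) := by
  obtain ⟨⟨hpath₁, hnodup₁, hmem₁⟩, horth₁⟩ := h₁
  obtain ⟨⟨hpath₂, hnodup₂, hmem₂⟩, horth₂⟩ := h₂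
  refine ⟨⟨?_, ?_, fun v => by simp [hmem₁, hmem₂]⟩, ?_⟩
  · simpa only [List.mem_append, or_imp, forall_and] using ⟨hpath₁, hpath₂⟩
  · rw [List.flatten_append, List.nodup_append]
    exact ⟨hnodup₁, hnodup₂, fun a ha b hb => hW.ne_of_mem ((hmem₁ a).1 ha) ((hmem₂ b).1 hb)⟩
  · simpa only [Orthogonal, List.mem_append, or_imp, forall_and] using ⟨horth₁, horth₂⟩

theorem sPartOn_flatMap {ι : Type*} {W : ι → Set V} {P : ι → List (List V)}
    (hW : Pairwise fun i j => Disjoint (W i) (W j)) :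
    ∀ {l : List ι}, l.Nodup → (∀ i ∈ l, SPartOn E (W i) S (P i)) →
      SPartOn E (⋃ i ∈ l, W i) S (l.flatMap P)
  | [], _, _ => by simpa using sPartOn_empty
  | i :: l, hl, hP => by
    rw [List.nodup_cons] at hl
    rw [List.flatMap_cons]
    simp only [List.mem_cons, Set.iUnion_iUnion_eq_or_left]
    refine (hP i (List.mem_cons_self ..)).append
      (sPartOn_flatMap hW hl.2 fun j hj => hP j (List.mem_cons_of_mem _ hj)) ?_
    exact Set.disjoint_iUnion₂_right.2 fun j hj => hW fun h => hl.1 (h ▸ hj)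

def zipPaths : List V → List V → List V → List (List V)
  | _, [], _ => []
  | us, x :: xs, ws => (us.head?.toList ++ x :: ws.head?.toList) :: zipPaths us.tail xs ws.tail

theorem mem_zipPaths {p : List V} : ∀ {us xs ws : List V}, p ∈ zipPaths us xs ws →
    ∃ x ∈ xs, ∃ uo wo : Option V, (∀ u ∈ uo, u ∈ us) ∧ (∀ w ∈ wo, w ∈ ws) ∧
      p = uo.toList ++ x :: wo.toList
  | _, [], _, h => by simp [zipPaths] at h
  | us, x :: xs, ws, h => by
    rcases List.mem_cons.1 h with rfl | h
    · exact ⟨x, List.mem_cons_self .., us.head?, ws.head?, fun u => List.mem_of_mem_head?,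
        fun w => List.mem_of_mem_head?, rfl⟩
    · obtain ⟨y, hy, uo, wo, hu, hw, rfl⟩ := mem_zipPaths h
      exact ⟨y, List.mem_cons_of_mem _ hy, uo, wo, fun u h => List.mem_of_mem_tail (hu u h),
        fun w h => List.mem_of_mem_tail (hw w h), rfl⟩

theorem flatten_zipPaths_perm : ∀ {us xs ws : List V}, us.length ≤ xs.length →
    ws.length ≤ xs.length → (zipPaths us xs ws).flatten.Perm (us ++ xs ++ ws)
  | us, [], ws, hu, hw => by simp_all [zipPaths]
  | us, x :: xs, ws, hu, hw => by
    classical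
    have ih := flatten_zipPaths_perm (us := us.tail) (xs := xs) (ws := ws.tail)
      (by simp at hu ⊢; omega) (by simp at hw ⊢; omega)
    rw [zipPaths, List.flatten_cons]
    refine (ih.append_left _).trans (List.perm_iff_count.2 fun a => ?_)
    rcases us with _ | ⟨u, us⟩ <;> rcases ws with _ | ⟨w, ws⟩ <;>
      simp only [List.count_append, List.count_cons, List.count_nil, List.head?, List.tail,
        Option.toList] <;> omega

theorem isChain_toList_append_cons_toList {uo wo : Option V} {x : V}
    (hu : ∀ u ∈ uo, E u x) (hw : ∀ w ∈ wo, E x w) :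
    (uo.toList ++ x :: wo.toList).IsChain E := by
  rcases uo with _ | u <;> rcases wo with _ | w <;> simp_all

theorem sPartOn_zipPaths {us xs ws : List V} (hu : us.length ≤ xs.length)
    (hw : ws.length ≤ xs.length) (hnodup : (us ++ xs ++ ws).Nodup)
    (hux : ∀ u ∈ us, ∀ x ∈ xs, E u x) (hxw : ∀ x ∈ xs, ∀ w ∈ ws, E x w)
    (hxS : ∀ x ∈ xs, x ∈ S) (huS : ∀ u ∈ us, u ∉ S) (hwS : ∀ w ∈ ws, w ∉ S) :
    SPartOn E {v | v ∈ us ++ xs ++ ws} S (zipPaths us xs ws) := by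
  have hperm := flatten_zipPaths_perm hu hw
  refine ⟨⟨fun p hp => ?_, hperm.nodup_iff.2 hnodup, fun v => hperm.mem_iff⟩,
    fun p hp => ?_⟩ <;> obtain ⟨x, hx, uo, wo, huo, hwo, rfl⟩ := mem_zipPaths hp
  · exact ⟨by simp, isChain_toList_append_cons_toList (fun u h => hux u (huo u h) x hx)
      (fun w h => hxw x hx w (hwo w h))⟩
  · refine ⟨x, ⟨by simp, hxS x hx⟩, fun y ⟨hy, hyS⟩ => ?_⟩
    simp only [List.mem_append, List.mem_cons, Option.mem_toList] at hy
    rcases hy with hy | rfl | hy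
    · exact absurd hyS (huS y (huo y hy))
    · rfl
    · exact absurd hyS (hwS y (hwo y hy))

theorem exists_sPartOn_of_join [Finite V] {U M W : Set V} (hU : U.ncard ≤ M.ncard)
    (hW : W.ncard ≤ M.ncard) (hUW : Disjoint U W) (hMS : M ⊆ S) (hUS : Disjoint U S)
    (hWS : Disjoint W S) (hUM : ∀ u ∈ U, ∀ x ∈ M, E u x) (hMW : ∀ x ∈ M, ∀ w ∈ W, E x w) :
    ∃ P, SPartOn E (U ∪ M ∪ W) S P := by
  have mem {A : Set V} {v : V} : v ∈ (Set.toFinite A).toFinset.toList ↔ v ∈ A := by simp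
  have len (A : Set V) : (Set.toFinite A).toFinset.toList.length = A.ncard := by
    rw [Finset.length_toList, Set.ncard_eq_toFinset_card]
  have hset : U ∪ M ∪ W = {v | v ∈ (Set.toFinite U).toFinset.toList ++
      (Set.toFinite M).toFinset.toList ++ (Set.toFinite W).toFinset.toList} := by
    ext v; simp [or_assoc]
  rw [hset]
  refine ⟨_, sPartOn_zipPaths (by rwa [len, len]) (by rwa [len, len]) ?_
    (fun u hu x hx => hUM u (mem.1 hu) x (mem.1 hx))
    (fun x hx w hw => hMW x (mem.1 hx) w (mem.1 hw))
    (fun x hx => hMS (mem.1 hx)) (fun u hu => Set.disjoint_left.1 hUS (mem.1 hu))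
    (fun w hw => Set.disjoint_left.1 hWS (mem.1 hw))⟩
  simp only [List.nodup_append, Finset.nodup_toList, List.mem_append, mem, true_and]
  refine ⟨fun u hu x hx => ?_, fun v hv w hw => ?_⟩
  · exact ne_of_mem_of_not_mem hu (Set.disjoint_right.1 hUS (hMS hx))
  · rcases hv with hv | hv
    · exact hUW.ne_of_mem hv hw
    · exact ne_of_mem_of_not_mem (hMS hv) (Set.disjoint_left.1 hWS hw)

theorem MaxStableOn.ncard_sdiff_le_ncard_inter_nbhd [Finite V] {W Y : Set V}
    (hS : MaxStableOn E W S) (hY : StableOn E W Y) : (Y \ S).ncard ≤ (S ∩ Nbhd E Y).ncard := by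
  obtain ⟨⟨hSW, hSstab⟩, hmax⟩ := hS
  have hT : StableOn E W (S \ Nbhd E Y ∪ Y \ S) := by
    refine ⟨Set.union_subset (Set.sdiff_subset.trans hSW) (Set.sdiff_subset.trans hY.1), ?_⟩
    have hmixed : ∀ s ∈ S \ Nbhd E Y, ∀ y ∈ Y, s ≠ y → ¬ Adj E s y := by
      rintro s ⟨-, hsN⟩ y hy hsy hadj
      by_cases hsY : s ∈ Y
      · exact hY.2 s hsY y hy hsy hadj
      · exact hsN ⟨hsY, y, hy, hadj.symm⟩
    rintro u (hu | hu) v (hv | hv) huv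
    · exact hSstab u hu.1 v hv.1 huv
    · exact hmixed u hu v hv.1 huv
    · exact fun h => hmixed v hv u hu.1 huv.symm h.symm
    · exact hY.2 u hu.1 v hv.1 huv
  have hle := hmax _ hT
  rw [Set.ncard_union_eq (Set.disjoint_sdiff_right.mono_left Set.sdiff_subset)] at hle
  have hsplit := Set.ncard_inter_add_ncard_sdiff_eq_ncard S (Nbhd E Y)
  omega

theorem exists_subset_ncard_le_and_ncard_sdiff_le {α : Type*} {D : Set α} {a b : ℕ}
    (hD : D.Finite) (h : D.ncard ≤ a + b) : ∃ F ⊆ D, F.ncard ≤ a ∧ (D \ F).ncard ≤ b := by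
  obtain ⟨F, hFD, hF⟩ := Set.exists_subset_card_eq (min_le_right a D.ncard)
  refine ⟨F, hFD, hF ▸ min_le_left _ _, ?_⟩
  rw [Set.ncard_sdiff hFD (hD.subset hFD), hF]
  omega

theorem ExtCycleOn.exists_layer_map {k : ℕ} {X : ZMod k → Set V}
    (h : ExtCycleOn E k X Set.univ) :
    ∃ c : V → ZMod k, X = (fun i => c ⁻¹' {i}) ∧ ∀ u v, E u v ↔ c v = c u + 1 := by
  obtain ⟨hcover, hdisj, -, -, hE⟩ := h
  choose c hc using fun v => Set.mem_iUnion.1 (hcover ▸ Set.mem_univ v)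
  have hmem (v : V) (i : ZMod k) : v ∈ X i ↔ c v = i :=
    ⟨fun h => by_contra fun hne => Set.disjoint_left.1 (hdisj _ _ hne) (hc v) h,
      fun h => h ▸ hc v⟩
  refine ⟨c, funext fun i => Set.ext fun v => hmem v i, fun u v => ?_⟩
  simp [hE u trivial v trivial, hmem]

section Layered

variable {G : Type*} [AddGroupWithOne G] {c : V → G}

theorem nbhd_preimage_subset (hc : ∀ u v, E u v ↔ c v = c u + 1) (j : G) :
    Nbhd E (c ⁻¹' {j}) ⊆ c ⁻¹' {j + 1} ∪ c ⁻¹' {j - 1} := by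
  rintro v ⟨-, u, rfl, huv | hvu⟩
  · exact Or.inl ((hc u v).1 huv)
  · exact Or.inr (eq_sub_of_add_eq ((hc v u).1 hvu).symm)

theorem ncard_preimage_sdiff_le [Finite V] (hc : ∀ u v, E u v ↔ c v = c u + 1)
    (hS : MaxStableOn E Set.univ S) {j : G} (hstab : Stable E (c ⁻¹' {j})) :
    (c ⁻¹' {j} \ S).ncard ≤ (S ∩ c ⁻¹' {j + 1}).ncard + (S ∩ c ⁻¹' {j - 1}).ncard :=
  calc (c ⁻¹' {j} \ S).ncard ≤ (S ∩ Nbhd E (c ⁻¹' {j})).ncard :=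
        hS.ncard_sdiff_le_ncard_inter_nbhd ⟨Set.subset_univ _, hstab⟩
    _ ≤ (S ∩ c ⁻¹' {j + 1} ∪ S ∩ c ⁻¹' {j - 1}).ncard := by
        rw [← Set.inter_union_distrib_left]
        exact Set.ncard_le_ncard (Set.inter_subset_inter_right _ (nbhd_preimage_subset hc j))
    _ ≤ _ := Set.ncard_union_le _ _

theorem exists_sPartOn_of_layer_split [Finite V] (hc : ∀ u v, c v = c u + 1 → E u v)
    {F : G → Set V} (hFsub : ∀ j, F j ⊆ c ⁻¹' {j} \ S)
    (hF : ∀ j, (F j).ncard ≤ (S ∩ c ⁻¹' {j + 1}).ncard)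
    (hF' : ∀ j, ((c ⁻¹' {j} \ S) \ F j).ncard ≤ (S ∩ c ⁻¹' {j - 1}).ncard) :
    ∃ P, SPartOn E Set.univ S P := by
  classical
  have hF_mem {v : V} {j : G} : v ∈ F j ↔ v ∉ S ∧ c v = j ∧ v ∈ F (c v) :=
    ⟨fun hv => have hvj := hFsub j hv; ⟨hvj.2, hvj.1, hvj.1 ▸ hv⟩, fun ⟨_, hvj, hv⟩ => hvj ▸ hv⟩
  -- `owner v` is the layer of the vertex of `S` whose path contains `v`.
  let owner (v : V) : G := if v ∈ S then c v else if v ∈ F (c v) then c v + 1 else c v - 1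
  let block (i : G) : Set V := F (i - 1) ∪ S ∩ c ⁻¹' {i} ∪ (c ⁻¹' {i + 1} \ S) \ F (i + 1)
  have mem_block (v : V) (i : G) : v ∈ block i ↔ owner v = i := by
    by_cases hvS : v ∈ S <;> by_cases hvF : v ∈ F (c v) <;>
      simp [block, owner, hvS, hvF, hF_mem (j := i - 1), hF_mem (j := i + 1), eq_sub_iff_add_eq,
        sub_eq_iff_eq_add]
  have hblock (i : G) : ∃ P, SPartOn E (block i) S P := by
    refine exists_sPartOn_of_join ?_ ?_ ?_ Set.inter_subset_left ?_ ?_ ?_ ?_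
    · simpa only [sub_add_cancel] using hF (i - 1)
    · simpa only [add_sub_cancel_right] using hF' (i + 1)
    · refine Set.disjoint_left.2 fun v hvU hvW => hvW.2 ?_
      exact (show c v = i + 1 from hvW.1.1) ▸ (hF_mem.1 hvU).2.2
    · exact Set.disjoint_left.2 fun v hv => (hFsub _ hv).2
    · exact Set.disjoint_left.2 fun v hv => hv.1.2
    · intro u hu x hx
      exact hc u x <| by
        rw [show c x = i from hx.2, show c u = i - 1 from (hFsub _ hu).1, sub_add_cancel]
    · intro x hx w hw
      exact hc x w (by rw [show c w = i + 1 from hw.1.1, show c x = i from hx.2])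
  choose P hP using hblock
  cases nonempty_fintype V
  have hpart := sPartOn_flatMap (W := block) (l := (Finset.univ.image owner).toList)
    (fun i j hij => Set.disjoint_left.2 fun v hi hj =>
      hij ((mem_block v i).1 hi ▸ (mem_block v j).1 hj))
    (Finset.nodup_toList _) fun i _ => hP i
  refine ⟨_, (congrArg (SPartOn E · S _) ?_).mp hpart⟩
  exact Set.eq_univ_of_forall fun v => Set.mem_iUnion₂.2 ⟨owner v, by simp, (mem_block v _).2 rfl⟩

theorem exists_sPartOn_of_ncard_preimage_sdiff_le [Finite V] (hc : ∀ u v, c v = c u + 1 → E u v)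
    (h : ∀ j, (c ⁻¹' {j} \ S).ncard ≤ (S ∩ c ⁻¹' {j + 1}).ncard + (S ∩ c ⁻¹' {j - 1}).ncard) :
    ∃ P, SPartOn E Set.univ S P := by
  choose F hFsub hF hF' using
    fun j => exists_subset_ncard_le_and_ncard_sdiff_le (Set.toFinite _) (h j)
  exact exists_sPartOn_of_layer_split hc hFsub hF hF'

end Layered

end Paper

open Paper in
theorem stmt18_general {V : Type*} [Fintype V] (E : V → V → Prop)
    (k : ℕ) (X : ZMod k → Set V)
    (hext : ExtCycleOn E k X Set.univ) :
    AlphaPropOn E Set.univ := by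
  intro S hS
  obtain ⟨c, rfl, hc⟩ := hext.exists_layer_map
  exact exists_sPartOn_of_ncard_preimage_sdiff_le (fun u v => (hc u v).2)
    fun j => ncard_preimage_sdiff_le hc hS (hext.2.2.2.1 j)

open Paper in
theorem stmt18 {V : Type*} [Fintype V] (E : V → V → Prop)
    (k : ℕ) (hk : 2 ≤ k) (X : ZMod k → Set V)
    (hext : ExtCycleOn E k X Set.univ) :
    AlphaPropOn E Set.univ :=
  stmt18_general E k X hext
end

section
/- Let D be a digraph whose vertex set can be partitioned into subsets V₁, ..., V_k (k ≥ 2) such that each induced subdigraph D[V_i] satisfies the BE-property and α(D) = Σ_{i=1}^{k} α(D[V_i]). Then D satisfies the BE-property. -/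
open Set

/-!
A maximum stable set `S` of `D` meets each part `V i` in a stable set of `D[V i]`, so
`|S| = ∑ |S ∩ V i| ≤ ∑ α(D[V i]) = α(D) = |S|`; hence every `S ∩ V i` is a maximum stable set
of `D[V i]`. The BE-path partitions of the `D[V i]` with respect to the `S ∩ V i` are then
vertex-disjoint, and together they form a BE-path partition of `D` with respect to `S`.
-/

open Set Function

theorem Set.ncard_eq_sum_ncard_inter {α ι : Type*} [Fintype ι] {W : ι → Set α}
    (hdisj : Pairwise (Disjoint on W)) {S : Set α} (hS : S.Finite) (hcov : S ⊆ ⋃ i, W i) :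
    S.ncard = ∑ i, (S ∩ W i).ncard := by
  have hS_eq : S = ⋃ i, S ∩ W i := by rw [← inter_iUnion, inter_eq_left.2 hcov]
  conv_lhs => rw [hS_eq]
  rw [ncard_iUnion_of_finite (fun _ => hS.inter_of_left _)
    (fun i j hij => (hdisj hij).mono inter_subset_right inter_subset_right),
    finsum_eq_sum_of_fintype]

namespace Paper

variable {V : Type*} {E : V → V → Prop}

section Stability

variable [Finite V] {W S : Set V}

lemma bddAbove_stableOn_ncard (W : Set V) :
    BddAbove {n | ∃ S, StableOn E W S ∧ S.ncard = n} :=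
  ⟨Nat.card V, by rintro n ⟨T, -, rfl⟩; exact ncard_le_card T⟩

lemma StableOn.ncard_le_alphaOn (h : StableOn E W S) : S.ncard ≤ alphaOn E W :=
  le_csSup (bddAbove_stableOn_ncard W) ⟨S, h, rfl⟩

lemma MaxStableOn.ncard_eq_alphaOn (h : MaxStableOn E W S) : S.ncard = alphaOn E W :=
  h.1.ncard_le_alphaOn.antisymm <|
    csSup_le ⟨_, S, h.1, rfl⟩ (by rintro n ⟨T, hT, rfl⟩; exact h.2 T hT)

lemma StableOn.maxStableOn_of_ncard_eq (h : StableOn E W S) (hS : S.ncard = alphaOn E W) :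
    MaxStableOn E W S :=
  ⟨h, fun _ hT => hS ▸ hT.ncard_le_alphaOn⟩

end Stability

lemma Stable.stableOn_inter {S : Set V} (h : Stable E S) (W : Set V) : StableOn E W (S ∩ W) :=
  ⟨inter_subset_right, fun u hu v hv => h u hu.1 v hv.1⟩

theorem MaxStableOn.maxStableOn_inter_of_alphaOn_eq_sum [Finite V] {ι : Type*} [Fintype ι]
    {W : ι → Set V} (hdisj : Pairwise (Disjoint on W)) (hcov : (⋃ i, W i) = univ)
    (halpha : alphaOn E univ = ∑ i, alphaOn E (W i)) {S : Set V} (hS : MaxStableOn E univ S)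
    (i : ι) : MaxStableOn E (W i) (S ∩ W i) := by
  have hstable : ∀ j, StableOn E (W j) (S ∩ W j) :=
    fun j => hS.1.2.stableOn_inter (W j)
  have hsum : ∑ j, (S ∩ W j).ncard = ∑ j, alphaOn E (W j) := by
    rw [← halpha, ← hS.ncard_eq_alphaOn,
      ncard_eq_sum_ncard_inter hdisj S.toFinite (hcov ▸ subset_univ S)]
  have hle : ∀ j ∈ Finset.univ, (S ∩ W j).ncard ≤ alphaOn E (W j) :=
    fun j _ => (hstable j).ncard_le_alphaOn
  exact (hstable i).maxStableOn_of_ncard_eq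
    ((Finset.sum_eq_sum_iff_of_le hle).1 hsum i (Finset.mem_univ i))

lemma PathPartitionOn.mem_of_mem {W : Set V} {P : List (List V)} (h : PathPartitionOn E W P)
    {p : List V} (hp : p ∈ P) {v : V} (hv : v ∈ p) : v ∈ W :=
  (h.2.2 v).1 (List.mem_flatten.2 ⟨p, hp, hv⟩)

section Gluing

variable {ι : Type*} [Fintype ι] {W : ι → Set V} {P : ι → List (List V)}

lemma mem_flatMap_univ_toList {p : List V} :
    p ∈ (Finset.univ : Finset ι).toList.flatMap P ↔ ∃ i, p ∈ P i := by
  simp only [List.mem_flatMap, Finset.mem_toList, Finset.mem_univ, true_and]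

lemma PathPartitionOn.flatMap (hdisj : Pairwise (Disjoint on W))
    (hP : ∀ i, PathPartitionOn E (W i) (P i)) :
    PathPartitionOn E (⋃ i, W i) ((Finset.univ : Finset ι).toList.flatMap P) := by
  have hflatten : ((Finset.univ : Finset ι).toList.flatMap P).flatten =
      (Finset.univ : Finset ι).toList.flatMap fun i => (P i).flatten := by
    simp only [List.flatMap_def, List.flatten_flatten, List.map_map, comp_def]
  refine ⟨fun p hp => ?_, ?_, fun v => ?_⟩
  · obtain ⟨i, hi⟩ := mem_flatMap_univ_toList.1 hp
    exact (hP i).1 p hi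
  · rw [hflatten, List.nodup_flatMap]
    refine ⟨fun i _ => (hP i).2.1, (Finset.nodup_toList _).imp fun hij v hvi hvj => ?_⟩
    exact disjoint_left.1 (hdisj hij) (((hP _).2.2 v).1 hvi) (((hP _).2.2 v).1 hvj)
  · simp only [hflatten, List.mem_flatMap, Finset.mem_toList, Finset.mem_univ, true_and,
      mem_iUnion, fun i => (hP i).2.2 v]

lemma BEPartOn.flatMap (hdisj : Pairwise (Disjoint on W)) {S : Set V}
    (hP : ∀ i, BEPartOn E (W i) (S ∩ W i) (P i)) :
    BEPartOn E (⋃ i, W i) S ((Finset.univ : Finset ι).toList.flatMap P) := by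
  have hmem : ∀ i, ∀ p ∈ P i, ∀ v ∈ p, v ∈ S → v ∈ S ∩ W i :=
    fun i p hp v hv hvS => ⟨hvS, (hP i).1.1.mem_of_mem hp hv⟩
  refine ⟨⟨PathPartitionOn.flatMap hdisj fun i => (hP i).1.1, fun p hp => ?_⟩,
    fun p hp v hv hvS => ?_⟩
  · obtain ⟨i, hi⟩ := mem_flatMap_univ_toList.1 hp
    obtain ⟨v, ⟨hvp, hvS⟩, huniq⟩ := (hP i).1.2 p hi
    exact ⟨v, ⟨hvp, hvS.1⟩, fun w ⟨hwp, hwS⟩ => huniq w ⟨hwp, hmem i p hi w hwp hwS⟩⟩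
  · obtain ⟨i, hi⟩ := mem_flatMap_univ_toList.1 hp
    exact (hP i).2 p hi v hv (hmem i p hi v hv hvS)

end Gluing

end Paper

open Paper in
theorem stmt19_general {V : Type*} [Fintype V] (E : V → V → Prop)
    (k : ℕ) (W : Fin k → Set V)
    (hdisj : ∀ i j, i ≠ j → Disjoint (W i) (W j))
    (hcov : (⋃ i, W i) = Set.univ)
    (hBE : ∀ i, BEPropOn E (W i))
    (halpha : alphaOn E Set.univ = ∑ i, alphaOn E (W i)) :
    BEPropOn E Set.univ := by
  intro S hS
  have hW : Pairwise (Disjoint on W) := fun i j => hdisj i j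
  choose P hP using fun i =>
    hBE i (S ∩ W i) (hS.maxStableOn_inter_of_alphaOn_eq_sum hW hcov halpha i)
  exact ⟨_, hcov ▸ BEPartOn.flatMap hW hP⟩

open Paper in
theorem stmt19 {V : Type*} [Fintype V] (E : V → V → Prop)
    (k : ℕ) (hk : 2 ≤ k) (W : Fin k → Set V)
    (hdisj : ∀ i j, i ≠ j → Disjoint (W i) (W j))
    (hcov : (⋃ i, W i) = Set.univ)
    (hBE : ∀ i, BEPropOn E (W i))
    (halpha : alphaOn E Set.univ = ∑ i, alphaOn E (W i)) :
    BEPropOn E Set.univ :=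
  stmt19_general E k W hdisj hcov hBE halpha
end
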